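/- Let p(t) = Σ_{j≥0} β_j t^j be a power series with Σ_j β_j² 2^j ≤ B, and let θ' be a vector in the Euclidean unit ball of ℝ^d. Then there exists v in ℓ² (indexed as in the kernel feature map ψ) with ‖v‖² ≤ B^H such that for all u_{1:H} ∈ (𝔹₂)^H, ⟨v, ψ(u_{1:H})⟩ = ∏_{h=1}^H p(⟨u_h, θ'⟩). -/

import Mathlib

/-!
Write `w` for the vector indexed by words `l` over `Fin d` with
`w l = β_{|l|} 2^{|l|/2} ∏_k θ'_{l_k}`, and take `v = w ⊗ ⋯ ⊗ w` (`H` factors). Grouping words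
by length, `∑_l c_{|l|} ∏_k x_{l_k} = ∑_j c_j (∑_i x_i)^j`. With `x_i = u_i θ'_i` this gives
`⟨w, ψ₁(u)⟩ = ∑_j β_j ⟨u, θ'⟩^j`, and with `x_i = θ'_i²` it gives
`‖w‖² = ∑_j β_j² 2^j ‖θ'‖^{2j} ≤ B`; a sum over `H`-tuples of a product factorizes, so
`⟨v, ψ(u)⟩ = ∏_h p(⟨u_h, θ'⟩)` and `‖v‖² = ‖w‖^{2H} ≤ B^H`. All rearrangements are justified by
absolute convergence: `∑_i |u_i θ'_i| ≤ ‖u‖ ‖θ'‖ ≤ 1` and `2 |β_j| ≤ β_j² 2^j + 2^{-j}`.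
-/

/-- The feature map `ψ`: at index `ℓ = (i₁,…,i_H)` (a tuple of finite index-sequences over
`[d]`), its entry is `∏_h 2^{−|i_h|/2} ∏_k u_{h, i_{h,k}}`. -/
noncomputable def psiMap {d H : ℕ} (u : Fin H → EuclideanSpace ℝ (Fin d))
    (ℓ : Fin H → List (Fin d)) : ℝ :=
  ∏ h, (Real.sqrt 2)⁻¹ ^ (ℓ h).length * ((ℓ h).map (u h)).prod

open Finset

section NormedField

variable {R : Type*} [NormedField R]

theorem hasSum_list_length_mul_prod [CompleteSpace R] {ι : Type*} [Fintype ι]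
    (c : ℕ → R) (x : ι → R) (hc : Summable fun j => ‖c j‖ * (∑ i, ‖x i‖) ^ j) :
    HasSum (fun l : List ι => c l.length * (l.map x).prod) (∑' j, c j * (∑ i, x i) ^ j) := by
  set f : (Σ n, Fin n → ι) → R := fun p => c p.1 * ∏ k, x (p.2 k)
  have hfiber : ∀ n, HasSum (fun q => f ⟨n, q⟩) (c n * (∑ i, x i) ^ n) := fun n => by
    rw [Fintype.sum_pow, mul_sum]
    exact hasSum_fintype _
  have hfiber_norm : ∀ n, HasSum (fun q => ‖f ⟨n, q⟩‖) (‖c n‖ * (∑ i, ‖x i‖) ^ n) := fun n => by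
    simp only [f, norm_mul, norm_prod]
    rw [Fintype.sum_pow, mul_sum]
    exact hasSum_fintype _
  have hf : Summable f := Summable.of_norm <|
    (summable_sigma_of_nonneg fun _ => norm_nonneg _).2
      ⟨fun n => (hfiber_norm n).summable, by simpa only [(hfiber_norm _).tsum_eq] using hc⟩
  have hf_comp : f ∘ List.equivSigmaTuple = fun l : List ι => c l.length * (l.map x).prod := by
    funext l
    simp only [f, Function.comp_apply, List.equivSigmaTuple_apply_fst]
    rw [← List.ofFn_getElem_eq_map, List.prod_ofFn]
    rfl
  rw [← hf_comp, List.equivSigmaTuple.hasSum_iff, (hf.hasSum.sigma hfiber).tsum_eq]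
  exact hf.hasSum

theorem summable_norm_list_length_mul_prod {ι : Type*} [Fintype ι] (c : ℕ → R) (x : ι → R)
    (hc : Summable fun j => ‖c j‖ * (∑ i, ‖x i‖) ^ j) :
    Summable fun l : List ι => ‖c l.length * (l.map x).prod‖ := by
  have := hasSum_list_length_mul_prod (fun j => ‖c j‖) (fun i => ‖x i‖) (by simpa using hc)
  simpa only [norm_mul, List.norm_prod, List.map_map, Function.comp_def] using this.summable

theorem prod_apply_comp_consEquiv {M X : Type*} [CommMonoid M] {n : ℕ}
    (g : Fin (n + 1) → X → M) :
    (fun ℓ : Fin (n + 1) → X => ∏ h, g h (ℓ h)) ∘ Fin.consEquiv (fun _ => X) =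
      fun p => g 0 p.1 * ∏ h, g h.succ (p.2 h) := by
  funext p
  simp [Fin.consEquiv, Fin.prod_univ_succ]

theorem summable_norm_pi_fin_prod {X : Type*} {n : ℕ} (g : Fin n → X → R)
    (hg : ∀ h, Summable fun x => ‖g h x‖) :
    Summable fun ℓ : Fin n → X => ‖∏ h, g h (ℓ h)‖ := by
  induction n with
  | zero => exact Summable.of_finite
  | succ n ih =>
    rw [← (Fin.consEquiv fun _ => X).summable_iff]
    change Summable (norm ∘ ((fun ℓ : Fin (n + 1) → X => ∏ h, g h (ℓ h)) ∘ _))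
    rw [prod_apply_comp_consEquiv]
    -- elaborating this term against the goal (rather than checking it afterwards) times out
    have hsplit := (hg 0).mul_norm (ih _ fun h => hg h.succ)
    exact hsplit

theorem hasSum_pi_fin_prod [CompleteSpace R] {X : Type*} {n : ℕ} (g : Fin n → X → R)
    (hg : ∀ h, Summable fun x => ‖g h x‖) :
    HasSum (fun ℓ : Fin n → X => ∏ h, g h (ℓ h)) (∏ h, ∑' x, g h x) := by
  induction n with
  | zero => simp
  | succ n ih =>
    rw [← (Fin.consEquiv fun _ => X).hasSum_iff, prod_apply_comp_consEquiv, Fin.prod_univ_succ]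
    have htail := ih _ fun h => hg h.succ
    have hsplit :=
      summable_mul_of_summable_norm (hg 0) (summable_norm_pi_fin_prod _ fun h => hg h.succ)
    have hprod := (hg 0).of_norm.hasSum.mul htail hsplit
    exact hprod

theorem hasSum_pi_fin_prod_list [CompleteSpace R] {ι : Type*} [Fintype ι] {n : ℕ}
    (c : Fin n → ℕ → R) (x : Fin n → ι → R)
    (hc : ∀ h, Summable fun j => ‖c h j‖ * (∑ i, ‖x h i‖) ^ j) :
    HasSum (fun ℓ : Fin n → List ι => ∏ h, c h (ℓ h).length * ((ℓ h).map (x h)).prod)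
      (∏ h, ∑' j, c h j * (∑ i, x h i) ^ j) := by
  have hnorm : ∀ h, Summable fun l : List ι => ‖c h l.length * (l.map (x h)).prod‖ :=
    fun h => summable_norm_list_length_mul_prod (c h) (x h) (hc h)
  have h := hasSum_pi_fin_prod (fun h (l : List ι) => c h l.length * (l.map (x h)).prod) hnorm
  rwa [prod_congr rfl fun h _ => (hasSum_list_length_mul_prod _ _ (hc h)).tsum_eq] at h

end NormedField

theorem two_mul_abs_le_sq_mul_two_pow_add (b : ℝ) (j : ℕ) :
    2 * |b| ≤ b ^ 2 * 2 ^ j + (1 / 2) ^ j := by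
  have h2 : (2 : ℝ) ^ j * (1 / 2) ^ j = 1 := by rw [← mul_pow]; norm_num
  have hsq : b ^ 2 * 2 ^ j + (1 / 2) ^ j - 2 * |b| = (|b| * 2 ^ j - 1) ^ 2 * (1 / 2) ^ j := by
    linear_combination (2 * |b| - |b| ^ 2 * 2 ^ j) * h2 - 2 ^ j * sq_abs b
  rw [← sub_nonneg, hsq]
  positivity

theorem summable_abs_of_summable_sq_mul_two_pow {β : ℕ → ℝ}
    (hβ : Summable fun j => β j ^ 2 * 2 ^ j) : Summable fun j => |β j| :=
  .of_nonneg_of_le (fun _ => abs_nonneg _)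
    (fun j => by linarith [two_mul_abs_le_sq_mul_two_pow_add (β j) j])
    ((hβ.add summable_geometric_two).div_const 2)

theorem summable_norm_mul_pow_of_le_one {a : ℕ → ℝ} (ha : Summable fun j => ‖a j‖) {t : ℝ}
    (ht₀ : 0 ≤ t) (ht₁ : t ≤ 1) : Summable fun j => ‖a j‖ * t ^ j :=
  .of_nonneg_of_le (fun _ => by positivity)
    (fun _ => mul_le_of_le_one_right (norm_nonneg _) (pow_le_one₀ ht₀ ht₁)) ha

theorem sum_abs_mul_le_norm_mul_norm {ι : Type*} [Fintype ι] (u θ : EuclideanSpace ℝ ι) :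
    ∑ i, |u i * θ i| ≤ ‖u‖ * ‖θ‖ := by
  simpa only [abs_mul, sq_abs, EuclideanSpace.norm_eq, Real.norm_eq_abs] using
    Real.sum_mul_le_sqrt_mul_sqrt univ (fun i => |u i|) (fun i => |θ i|)

section InnerPowerSeries

variable {ι : Type*} {β : ℕ → ℝ} {θ : EuclideanSpace ℝ ι}

noncomputable def innerPowerSeriesCoeff (β : ℕ → ℝ) (θ : EuclideanSpace ℝ ι) (l : List ι) : ℝ :=
  β l.length * √2 ^ l.length * (l.map θ).prod

theorem innerPowerSeriesCoeff_mul (u : EuclideanSpace ℝ ι) (l : List ι) :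
    innerPowerSeriesCoeff β θ l * ((√2)⁻¹ ^ l.length * (l.map u).prod) =
      β l.length * (l.map fun i => u i * θ i).prod := by
  have h : √2 ^ l.length * (√2)⁻¹ ^ l.length = 1 := by
    rw [← mul_pow, mul_inv_cancel₀ (by positivity), one_pow]
  rw [innerPowerSeriesCoeff, List.prod_map_mul]
  linear_combination β l.length * (l.map u).prod * (l.map θ).prod * h

theorem innerPowerSeriesCoeff_sq (l : List ι) :
    innerPowerSeriesCoeff β θ l ^ 2 =
      β l.length ^ 2 * 2 ^ l.length * (l.map fun i => θ i ^ 2).prod := by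
  have h : √2 ^ l.length * √2 ^ l.length = 2 ^ l.length := by
    rw [← mul_pow, Real.mul_self_sqrt zero_le_two]
  simp only [innerPowerSeriesCoeff, sq, List.prod_map_mul]
  linear_combination β l.length * β l.length * (l.map θ).prod * (l.map θ).prod * h

variable [Fintype ι]

theorem summable_sq_series (hβ : Summable fun j => β j ^ 2 * 2 ^ j) (hθ : ‖θ‖ ≤ 1) :
    Summable fun j => ‖β j ^ 2 * 2 ^ j‖ * (∑ i, ‖θ i ^ 2‖) ^ j := by
  simp only [Real.norm_of_nonneg (sq_nonneg _), ← EuclideanSpace.real_norm_sq_eq]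
  exact summable_norm_mul_pow_of_le_one (by simpa using hβ) (by positivity)
    (pow_le_one₀ (norm_nonneg _) hθ)

theorem tsum_sq_series_le (hβ : Summable fun j => β j ^ 2 * 2 ^ j) (hθ : ‖θ‖ ≤ 1) :
    ∑' j, β j ^ 2 * 2 ^ j * (∑ i, θ i ^ 2) ^ j ≤ ∑' j, β j ^ 2 * 2 ^ j := by
  rw [← EuclideanSpace.real_norm_sq_eq]
  refine Summable.tsum_le_tsum (fun j => mul_le_of_le_one_right (by positivity)
    (pow_le_one₀ (by positivity) (pow_le_one₀ (norm_nonneg _) hθ))) ?_ hβ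
  simpa [EuclideanSpace.real_norm_sq_eq] using summable_sq_series hβ hθ

theorem summable_inner_series (hβ : Summable fun j => β j ^ 2 * 2 ^ j)
    {u : EuclideanSpace ℝ ι} (hu : ‖u‖ ≤ 1) (hθ : ‖θ‖ ≤ 1) :
    Summable fun j => ‖β j‖ * (∑ i, ‖u i * θ i‖) ^ j := by
  simp only [Real.norm_eq_abs]
  exact summable_norm_mul_pow_of_le_one
    (by simpa using summable_abs_of_summable_sq_mul_two_pow hβ) (by positivity)
    ((sum_abs_mul_le_norm_mul_norm u θ).trans (mul_le_one₀ hu (norm_nonneg _) hθ))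

end InnerPowerSeries

theorem power_series_product_in_rkhs_general (d H : ℕ) (β : ℕ → ℝ) (B : ℝ)
    (hsum : Summable (fun j => β j ^ 2 * 2 ^ j))
    (hB : (∑' j, β j ^ 2 * 2 ^ j) ≤ B)
    (θ' : EuclideanSpace ℝ (Fin d)) (hθ : ‖θ'‖ ≤ 1) :
    ∃ v : (Fin H → List (Fin d)) → ℝ,
      (∑' ℓ, v ℓ ^ 2) ≤ B ^ H ∧
      ∀ (u : Fin H → EuclideanSpace ℝ (Fin d)), (∀ h, ‖u h‖ ≤ 1) →
        (∑' ℓ, v ℓ * psiMap u ℓ) =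
          ∏ h, ∑' (j : ℕ), β j * (inner ℝ (u h) θ' : ℝ) ^ j := by
  refine ⟨fun ℓ => ∏ h, innerPowerSeriesCoeff β θ' (ℓ h), ?_, fun u hu => ?_⟩
  · have hsq := hasSum_pi_fin_prod_list (fun (_ : Fin H) j => β j ^ 2 * 2 ^ j)
      (fun _ i => θ' i ^ 2) fun _ => summable_sq_series hsum hθ
    simp_rw [← prod_pow, innerPowerSeriesCoeff_sq]
    rw [hsq.tsum_eq, prod_const, card_univ, Fintype.card_fin]
    exact pow_le_pow_left₀ (tsum_nonneg fun j => by positivity)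
      ((tsum_sq_series_le hsum hθ).trans hB) H
  · have hpair := hasSum_pi_fin_prod_list (fun _ => β) (fun h i => u h i * θ' i)
      fun h => summable_inner_series hsum (hu h) hθ
    have hinner : ∀ h, inner ℝ (u h) θ' = ∑ i, u h i * θ' i := fun h => by
      simp [PiLp.inner_apply, mul_comm]
    simp_rw [psiMap, ← prod_mul_distrib, innerPowerSeriesCoeff_mul, hinner]
    exact hpair.tsum_eq

/-- Products of power series of inner products are realized by bounded vectors in the RKHS:
if `p(t) = Σ_j β_j t^j` with `Σ_j β_j² 2^j ≤ B` and `‖θ'‖ ≤ 1`, there exists `v` with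
`‖v‖² ≤ B^H` such that `⟨v, ψ(u_{1:H})⟩ = ∏_h p(⟨u_h, θ'⟩)` for all unit-ball tuples. -/
theorem power_series_product_in_rkhs (d H : ℕ) (hH : 0 < H) (β : ℕ → ℝ) (B : ℝ)
    (hsum : Summable (fun j => β j ^ 2 * 2 ^ j))
    (hB : (∑' j, β j ^ 2 * 2 ^ j) ≤ B)
    (θ' : EuclideanSpace ℝ (Fin d)) (hθ : ‖θ'‖ ≤ 1) :
    ∃ v : (Fin H → List (Fin d)) → ℝ,
      (∑' ℓ, v ℓ ^ 2) ≤ B ^ H ∧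
      ∀ (u : Fin H → EuclideanSpace ℝ (Fin d)), (∀ h, ‖u h‖ ≤ 1) →
        (∑' ℓ, v ℓ * psiMap u ℓ) =
          ∏ h, ∑' (j : ℕ), β j * (inner ℝ (u h) θ' : ℝ) ^ j :=
  power_series_product_in_rkhs_general d H β B hsum hB θ' hθ
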